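/- Let p ∈ ℂ[z₁,z₂] have bidegree (n,m), no zeros in 𝔻², and no common factor with p̃, and suppose (A₁, A₂) is an Agler pair for p with A₁ ∈ ℂᴺ[z₁,z₂], A₂ ∈ ℂᴹ[z₁,z₂]. Then there exists a (1+N+M) × (1+N+M) unitary matrix U = [[A,B],[C,D]] (block sizes 1 and N+M) such that, with Δ(z) = diag(z₁ I_N, z₂ I_M), one has p̃(z)/p(z) = A + B Δ(z)(I − D Δ(z))⁻¹ C for all z ∈ 𝔻²; equivalently, p̃(z) = p(z)·(A + B Δ(z)(I − D Δ(z))⁻¹ C). -/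

import Mathlib

/-!
Write `F = (p, z₁A₁, z₂A₂)` and `G = (p̃, A₁, A₂)`, vector polynomials with values in
`ℂ^(1+N+M)`. The Agler identity says exactly that `‖F(z)‖ = ‖G(z)‖` for every `z ∈ ℂ²`. Since
`⟪F(z), F(w)⟫` is a polynomial in `(z̄, w)`, and polynomials vanishing on the totally real set
`{(z̄, z)}` vanish identically, polarization gives `⟪F(z), F(w)⟫ = ⟪G(z), G(w)⟫` for all `z, w`.
Hence `F(z) ↦ G(z)` extends to a unitary `U` (lurking isometry). Writing `U` in blocks, the
identity `U F(z) = G(z)` reads `A p + B Δ a = p̃` and `C p + D Δ a = a` with `a = (A₁, A₂)`. The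
bottom block `D` is a contraction and `‖Δ(z)‖ < 1` on the bidisk, so `1 - DΔ` is invertible and
eliminating `a` gives `p̃ = p (A + BΔ(1 - DΔ)⁻¹C)`.
-/

open MvPolynomial Matrix ComplexConjugate
open scoped InnerProductSpace

namespace MvPolynomial

theorem eq_zero_of_eval_natCast_eq_zero {R σ : Type*} [CommRing R] [IsDomain R] [CharZero R]
    [Finite σ] (P : MvPolynomial σ R) (h : ∀ k : σ → ℕ, eval (fun i => (k i : R)) P = 0) :
    P = 0 := by
  classical
  refine eq_zero_of_eval_zero_at_prod_finset P
    (fun i => (Finset.range (P.degreeOf i + 1)).image (Nat.cast : ℕ → R)) (fun i => ?_) ?_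
  · rw [Finset.card_image_of_injective _ Nat.cast_injective, Finset.card_range]
    exact Nat.lt_succ_self _
  · intro x hx
    choose k _ hk using fun i => Finset.mem_image.mp (hx i)
    simpa only [hk] using h k

theorem eq_zero_of_eval_elim_conj_eq_zero {σ : Type*} [Finite σ] (P : MvPolynomial (σ ⊕ σ) ℂ)
    (h : ∀ z : σ → ℂ, eval (Sum.elim (conj ∘ z) z) P = 0) : P = 0 := by
  -- `(x - iy, x + iy)` is `(z̄, z)` for real `x, y`, so `bind₁ φ P` vanishes on real points.
  let φ : σ ⊕ σ → MvPolynomial (σ ⊕ σ) ℂ :=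
    Sum.elim (fun i => X (.inl i) - Complex.I • X (.inr i))
      (fun i => X (.inl i) + Complex.I • X (.inr i))
  have hφ (x : σ ⊕ σ → ℂ) : eval x (bind₁ φ P) = eval (Sum.elim
      (fun i => x (.inl i) - Complex.I * x (.inr i))
      (fun i => x (.inl i) + Complex.I * x (.inr i))) P := by
    refine (eval₂Hom_bind₁ _ _ _ _).trans (congrArg (eval · P) ?_)
    ext (i | i) <;> simp [φ, sub_eq_add_neg]
  have hφP : bind₁ φ P = 0 := by
    refine eq_zero_of_eval_natCast_eq_zero _ fun k => ?_
    rw [hφ]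
    convert h fun i => (k (.inl i) : ℂ) + Complex.I * k (.inr i) using 2
    ext (i | i) <;> simp [sub_eq_add_neg]
  refine MvPolynomial.funext fun v => ?_
  calc eval v P
      = eval (Sum.elim (fun i => (v (.inl i) + v (.inr i)) / 2)
          (fun i => (v (.inr i) - v (.inl i)) / (2 * Complex.I))) (bind₁ φ P) := by
        rw [hφ]
        refine congrArg (eval · P) ?_
        ext (i | i) <;> simp only [Sum.elim_inl, Sum.elim_inr] <;> field_simp <;> ring
    _ = eval v 0 := by rw [hφP, map_zero, map_zero]

theorem eval_map_conj {σ : Type*} (x : σ → ℂ) (Q : MvPolynomial σ ℂ) :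
    eval x (map conj Q) = conj (eval (conj ∘ x) Q) := by
  rw [eval_map, eval, coe_eval₂Hom, eval₂_comp_left]
  congr 1
  ext; simp

noncomputable def evalEuclidean {σ ι : Type*} (F : ι → MvPolynomial σ ℂ) (z : σ → ℂ) :
    EuclideanSpace ℂ ι :=
  WithLp.toLp 2 fun i => eval z (F i)

noncomputable def gramPoly {σ ι : Type*} [Fintype ι] (F : ι → MvPolynomial σ ℂ) :
    MvPolynomial (σ ⊕ σ) ℂ :=
  ∑ i, rename Sum.inr (F i) * map conj (rename Sum.inl (F i))

theorem eval_gramPoly {σ ι : Type*} [Fintype ι] (F : ι → MvPolynomial σ ℂ) (z w : σ → ℂ) :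
    eval (Sum.elim (conj ∘ z) w) (gramPoly F) = ⟪evalEuclidean F z, evalEuclidean F w⟫_ℂ := by
  simp only [gramPoly, map_sum, map_mul, eval_map_conj, eval_rename, PiLp.inner_apply,
    evalEuclidean, Function.comp_def, Sum.elim_inr, Sum.elim_inl, RingHomCompTriple.comp_apply,
    RingHom.id_apply, RCLike.inner_apply]

theorem inner_evalEuclidean_eq_of_norm_eq {σ ι κ : Type*} [Finite σ] [Fintype ι] [Fintype κ]
    (F : ι → MvPolynomial σ ℂ) (G : κ → MvPolynomial σ ℂ)
    (h : ∀ z, ‖evalEuclidean F z‖ = ‖evalEuclidean G z‖) (z w : σ → ℂ) :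
    ⟪evalEuclidean F z, evalEuclidean F w⟫_ℂ = ⟪evalEuclidean G z, evalEuclidean G w⟫_ℂ := by
  have hgram : gramPoly F - gramPoly G = 0 :=
    eq_zero_of_eval_elim_conj_eq_zero _ fun z => by
      rw [map_sub, eval_gramPoly, eval_gramPoly, inner_self_eq_norm_sq_to_K,
        inner_self_eq_norm_sq_to_K, h, sub_self]
  rw [← eval_gramPoly, ← eval_gramPoly, ← sub_eq_zero, ← map_sub, hgram, map_zero]

end MvPolynomial

theorem exists_linearIsometry_apply_eq_of_inner_eq {𝕜 E X : Type*} [RCLike 𝕜]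
    [NormedAddCommGroup E] [InnerProductSpace 𝕜 E] [FiniteDimensional 𝕜 E] (f g : X → E)
    (h : ∀ x y, ⟪f x, f y⟫_𝕜 = ⟪g x, g y⟫_𝕜) :
    ∃ L : E →ₗᵢ[𝕜] E, ∀ x, L (f x) = g x := by
  let Tf := Finsupp.linearCombination 𝕜 f
  let Tg := Finsupp.linearCombination 𝕜 g
  have hT (c c' : X →₀ 𝕜) : ⟪Tf c, Tf c'⟫_𝕜 = ⟪Tg c, Tg c'⟫_𝕜 := by
    simp [Tf, Tg, Finsupp.linearCombination_apply, Finsupp.sum_inner, Finsupp.inner_sum,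
      inner_smul_left, inner_smul_right, h]
  have hnorm (c : X →₀ 𝕜) : ‖Tf c‖ = ‖Tg c‖ := by
    rw [norm_eq_sqrt_re_inner (𝕜 := 𝕜), norm_eq_sqrt_re_inner (𝕜 := 𝕜), hT]
  have hker : LinearMap.ker Tf ≤ LinearMap.ker Tg := fun c hc => by
    rw [LinearMap.mem_ker, ← norm_eq_zero, ← hnorm, norm_eq_zero]
    exact hc
  let Φ : LinearMap.range Tf →ₗ[𝕜] E :=
    (LinearMap.ker Tf).liftQ Tg hker ∘ₗ Tf.quotKerEquivRange.symm.toLinearMap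
  have hΦ (c : X →₀ 𝕜) : Φ ⟨Tf c, LinearMap.mem_range_self Tf c⟩ = Tg c := by
    have : Tf.quotKerEquivRange (Submodule.Quotient.mk c) =
        ⟨Tf c, LinearMap.mem_range_self Tf c⟩ :=
      Subtype.ext (LinearMap.quotKerEquivRange_apply_mk Tf c)
    simp [Φ, ← this]
  let L₀ : LinearMap.range Tf →ₗᵢ[𝕜] E :=
    { Φ with
      norm_map' := by
        rintro ⟨_, c, rfl⟩
        exact (congrArg norm (hΦ c)).trans (hnorm c).symm }
  refine ⟨L₀.extend, fun x => ?_⟩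
  have hfx : f x = Tf (Finsupp.single x 1) := by simp [Tf]
  have hgx : g x = Tg (Finsupp.single x 1) := by simp [Tg]
  rw [hfx, hgx, ← hΦ]
  exact L₀.extend_apply ⟨_, LinearMap.mem_range_self Tf _⟩

namespace Matrix

theorem exists_mem_unitaryGroup_mulVec_eq_of_inner_eq {𝕜 n X : Type*} [RCLike 𝕜] [Fintype n]
    [DecidableEq n] (f g : X → EuclideanSpace 𝕜 n) (h : ∀ x y, ⟪f x, f y⟫_𝕜 = ⟪g x, g y⟫_𝕜) :
    ∃ U ∈ unitaryGroup n 𝕜, ∀ x, U *ᵥ (f x).ofLp = (g x).ofLp := by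
  obtain ⟨L, hL⟩ := exists_linearIsometry_apply_eq_of_inner_eq f g h
  let U := (toEuclideanCLM (n := n) (𝕜 := 𝕜)).symm L.toContinuousLinearMap
  have hU : toEuclideanCLM (n := n) (𝕜 := 𝕜) U = L.toContinuousLinearMap :=
    StarAlgEquiv.apply_symm_apply _ _
  refine ⟨U, ?_, fun x => ?_⟩
  · rw [mem_unitaryGroup_iff']
    apply EquivLike.injective (toEuclideanCLM (n := n) (𝕜 := 𝕜))
    rw [map_mul, map_star, map_one, hU, ContinuousLinearMap.star_eq_adjoint]
    exact (ContinuousLinearMap.norm_map_iff_adjoint_comp_self _).mp L.norm_map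
  · rw [← ofLp_toEuclideanCLM, hU]
    exact congrArg WithLp.ofLp (hL x)

section L2OpNorm

open scoped Matrix.Norms.L2Operator

variable {𝕜 m n : Type*} [RCLike 𝕜] [Fintype m] [Fintype n] [DecidableEq n]

theorem l2_opNorm_le_one_of_conjTranspose_mul_self_eq_one {A : Matrix m n 𝕜} (hA : Aᴴ * A = 1) :
    ‖A‖ ≤ 1 := by
  have h : ‖A‖ * ‖A‖ ≤ 1 := by
    rw [← l2_opNorm_conjTranspose_mul_self, hA, cstar_norm_def, map_one]
    exact ContinuousLinearMap.norm_id_le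
  nlinarith [norm_nonneg A]

theorem l2_opNorm_toBlocks₂₂_le [DecidableEq m] (U : Matrix (m ⊕ n) (m ⊕ n) 𝕜) :
    ‖U.toBlocks₂₂‖ ≤ ‖U‖ := by
  let P : Matrix (m ⊕ n) n 𝕜 := fromRows 0 1
  have hP : ‖P‖ ≤ 1 := l2_opNorm_le_one_of_conjTranspose_mul_self_eq_one <| by
    simp [P, conjTranspose_fromRows_eq_fromCols_conjTranspose, fromCols_mul_fromRows]
  have hU : U.toBlocks₂₂ = Pᴴ * U * P := by
    conv_rhs => rw [← fromBlocks_toBlocks U]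
    simp [P, conjTranspose_fromRows_eq_fromCols_conjTranspose, Matrix.mul_assoc,
      fromBlocks_mul_fromRows, fromCols_mul_fromRows]
  calc ‖U.toBlocks₂₂‖ = ‖Pᴴ * U * P‖ := by rw [hU]
    _ ≤ ‖Pᴴ‖ * ‖U‖ * ‖P‖ := (l2_opNorm_mul _ _).trans (by gcongr; exact l2_opNorm_mul _ _)
    _ ≤ 1 * ‖U‖ * 1 := by rw [l2_opNorm_conjTranspose]; gcongr
    _ = ‖U‖ := by ring

theorem isUnit_det_one_sub_mul_diagonal {D : Matrix n n 𝕜} (hD : ‖D‖ ≤ 1) {v : n → 𝕜}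
    (hv : ∀ i, ‖v i‖ < 1) : IsUnit (1 - D * diagonal v).det := by
  have hv' : ‖v‖ < 1 := (pi_norm_lt_iff one_pos).mpr hv
  have hDv : ‖D * diagonal v‖ < 1 :=
    calc ‖D * diagonal v‖ ≤ ‖D‖ * ‖v‖ := by rw [← l2_opNorm_diagonal]; exact l2_opNorm_mul _ _
      _ < 1 := by nlinarith [norm_nonneg D, norm_nonneg v]
  exact (isUnit_iff_isUnit_det _).mp (Units.oneSub _ hDv).isUnit

theorem isUnit_det_one_sub_toBlocks₂₂_mul_diagonal [DecidableEq m]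
    {U : Matrix (m ⊕ n) (m ⊕ n) 𝕜} (hU : U ∈ unitaryGroup (m ⊕ n) 𝕜) {v : n → 𝕜}
    (hv : ∀ i, ‖v i‖ < 1) :
    IsUnit (1 - U.toBlocks₂₂ * diagonal v).det :=
  isUnit_det_one_sub_mul_diagonal ((l2_opNorm_toBlocks₂₂_le U).trans
    (l2_opNorm_le_one_of_conjTranspose_mul_self_eq_one (mem_unitaryGroup_iff'.mp hU))) hv

end L2OpNorm

theorem eq_mulVec_of_mulVec_sumElim_eq {R κ ι : Type*} [CommRing R] [Fintype κ] [Fintype ι]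
    [DecidableEq ι] (U : Matrix (κ ⊕ ι) (κ ⊕ ι) R) (Δ : Matrix ι ι R)
    (hdet : IsUnit (1 - U.toBlocks₂₂ * Δ).det) {a b : κ → R} {v : ι → R}
    (h : U *ᵥ Sum.elim a (Δ *ᵥ v) = Sum.elim b v) :
    b = (U.toBlocks₁₁ + U.toBlocks₁₂ * Δ * (1 - U.toBlocks₂₂ * Δ)⁻¹ * U.toBlocks₂₁) *ᵥ a := by
  rw [← fromBlocks_toBlocks U, fromBlocks_mulVec, Sum.elim_comp_inl, Sum.elim_comp_inr] at h
  obtain ⟨hb, hv⟩ := Sum.elim_eq_iff.mp h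
  have hMv : (1 - U.toBlocks₂₂ * Δ) *ᵥ v = U.toBlocks₂₁ *ᵥ a := by
    rw [sub_mulVec, one_mulVec, ← mulVec_mulVec, sub_eq_iff_eq_add]
    exact hv.symm
  have hv' : v = (1 - U.toBlocks₂₂ * Δ)⁻¹ *ᵥ U.toBlocks₂₁ *ᵥ a := by
    rw [← hMv, mulVec_mulVec, nonsing_inv_mul _ hdet, one_mulVec]
  rw [← hb, hv']
  simp only [add_mulVec, mulVec_mulVec, Matrix.mul_assoc]

end Matrix

theorem stmt19 (N M : ℕ) (p pt : MvPolynomial (Fin 2) ℂ)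
    (A₁ : (Fin 2 → ℂ) → Fin N → ℂ) (A₂ : (Fin 2 → ℂ) → Fin M → ℂ)
    (hA₁ : ∀ i, ∃ q : MvPolynomial (Fin 2) ℂ, ∀ z, A₁ z i = eval z q)
    (hA₂ : ∀ i, ∃ q : MvPolynomial (Fin 2) ℂ, ∀ z, A₂ z i = eval z q)
    (hAgler : ∀ z : Fin 2 → ℂ,
      ‖eval z p‖ ^ 2 - ‖eval z pt‖ ^ 2 =
        (1 - ‖z 0‖ ^ 2) * ∑ i, ‖A₁ z i‖ ^ 2 + (1 - ‖z 1‖ ^ 2) * ∑ i, ‖A₂ z i‖ ^ 2) :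
    ∃ U : Matrix (Unit ⊕ (Fin N ⊕ Fin M)) (Unit ⊕ (Fin N ⊕ Fin M)) ℂ,
      U ∈ Matrix.unitaryGroup (Unit ⊕ (Fin N ⊕ Fin M)) ℂ ∧
      ∀ z : Fin 2 → ℂ, ‖z 0‖ < 1 → ‖z 1‖ < 1 →
        eval z pt = eval z p *
          (U (Sum.inl ()) (Sum.inl ()) +
            (Matrix.of (fun (_ : Unit) (j : Fin N ⊕ Fin M) => U (Sum.inl ()) (Sum.inr j)) *
              Matrix.diagonal (Sum.elim (fun _ : Fin N => z 0) (fun _ : Fin M => z 1)) *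
              (1 - Matrix.of (fun (i j : Fin N ⊕ Fin M) => U (Sum.inr i) (Sum.inr j)) *
                Matrix.diagonal (Sum.elim (fun _ : Fin N => z 0) (fun _ : Fin M => z 1)))⁻¹ *
              Matrix.of (fun (i : Fin N ⊕ Fin M) (_ : Unit) => U (Sum.inr i) (Sum.inl ())))
              () ()) := by
  choose q hq using hA₁
  choose r hr using hA₂
  let F : Unit ⊕ (Fin N ⊕ Fin M) → MvPolynomial (Fin 2) ℂ :=
    Sum.elim (fun _ => p) (Sum.elim (fun i => X 0 * q i) (fun i => X 1 * r i))
  let G : Unit ⊕ (Fin N ⊕ Fin M) → MvPolynomial (Fin 2) ℂ :=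
    Sum.elim (fun _ => pt) (Sum.elim q r)
  have hnorm (z : Fin 2 → ℂ) : ‖evalEuclidean F z‖ = ‖evalEuclidean G z‖ := by
    rw [EuclideanSpace.norm_eq, EuclideanSpace.norm_eq]
    congr 1
    simp only [evalEuclidean, F, G, Fintype.sum_sum_type, Finset.univ_unique, Sum.elim_inl,
      Sum.elim_inr, Finset.sum_singleton, map_mul, eval_X, Complex.norm_mul, mul_pow, ← hq, ← hr]
    rw [← Finset.mul_sum, ← Finset.mul_sum]
    linarith [hAgler z]
  obtain ⟨U, hU, hUFG⟩ := exists_mem_unitaryGroup_mulVec_eq_of_inner_eq _ _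
    (inner_evalEuclidean_eq_of_norm_eq F G hnorm)
  refine ⟨U, hU, fun z hz₀ hz₁ => ?_⟩
  let δ : Fin N ⊕ Fin M → ℂ := Sum.elim (fun _ => z 0) (fun _ => z 1)
  have hdet : IsUnit (1 - U.toBlocks₂₂ * diagonal δ).det :=
    isUnit_det_one_sub_toBlocks₂₂_mul_diagonal hU (by rintro (i | i) <;> assumption)
  have hF : (evalEuclidean F z).ofLp =
      Sum.elim (fun _ => eval z p) (diagonal δ *ᵥ Sum.elim (A₁ z) (A₂ z)) := by
    ext (_ | i | i) <;> simp [F, δ, evalEuclidean, mulVec_diagonal, hq, hr]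
  have hG : (evalEuclidean G z).ofLp =
      Sum.elim (fun _ => eval z pt) (Sum.elim (A₁ z) (A₂ z)) := by
    ext (_ | i | i) <;> simp [G, evalEuclidean, hq, hr]
  have hpt := congrFun (eq_mulVec_of_mulVec_sumElim_eq U _ hdet (hF ▸ hG ▸ hUFG z)) ()
  simp only [mulVec, dotProduct, Finset.univ_unique, Finset.sum_singleton, Matrix.add_apply] at hpt
  exact hpt.trans (mul_comm _ _)
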